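/- arXiv:2411.02369 — 3 statements merged into one kernel-verified Lean document; each statement's English description precedes it below -/
import Mathlib

section
/- The subgroup of SL(2,ℂ) generated by the two matrices E and F is not discrete: the subspace topology that this subgroup inherits from SL(2,ℂ) is not the discrete topology. -/
/-!
STATEMENT 4: The subgroup of SL(2,ℂ) generated by the matrices E and F is not discrete.
-/

noncomputable section

open Matrix Complex

abbrev SL2C := Matrix.SpecialLinearGroup (Fin 2) ℂ

instance : TopologicalSpace SL2C := instTopologicalSpaceSubtype

def E : Matrix (Fin 2) (Fin 2) ℂ :=
  ((2 * Real.sqrt 6 : ℝ) : ℂ)⁻¹ •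
    !![5, 3 * (Real.sqrt 3 : ℂ) * Complex.I;
       (Real.sqrt 3 : ℂ) * Complex.I, 3]

def F : Matrix (Fin 2) (Fin 2) ℂ :=
  ((4 * Real.sqrt 2 : ℝ) : ℂ)⁻¹ •
    !![5, -(Real.sqrt 3 : ℂ) * Complex.I;
       (Real.sqrt 3 : ℂ) * Complex.I, 7]

section Aux
open Filter

-- basic square-root facts
lemma h6 : ((Real.sqrt 6 : ℝ):ℂ)^2 = 6 := by
  rw [← Complex.ofReal_pow, Real.sq_sqrt (by norm_num)]; norm_num
lemma h3 : ((Real.sqrt 3 : ℝ):ℂ)^2 = 3 := by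
  rw [← Complex.ofReal_pow, Real.sq_sqrt (by norm_num)]; norm_num
lemma h2 : ((Real.sqrt 2 : ℝ):ℂ)^2 = 2 := by
  rw [← Complex.ofReal_pow, Real.sq_sqrt (by norm_num)]; norm_num
lemma hne6 : ((Real.sqrt 6 : ℝ):ℂ) ≠ 0 := by
  intro h; have h' := h6; rw [h] at h'; norm_num at h'
lemma hne3 : ((Real.sqrt 3 : ℝ):ℂ) ≠ 0 := by
  intro h; have h' := h3; rw [h] at h'; norm_num at h'
lemma hne2 : ((Real.sqrt 2 : ℝ):ℂ) ≠ 0 := by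
  intro h; have h' := h2; rw [h] at h'; norm_num at h'

lemma detE : E.det = 1 := by
  simp [E, Matrix.det_fin_two]
  field_simp
  ring_nf
  linear_combination (-3*Complex.I^2:ℂ)*h3 + (-4:ℂ)*h6 + (-9:ℂ)*Complex.I_sq

lemma detF : F.det = 1 := by
  simp [F, Matrix.det_fin_two]
  field_simp
  ring_nf
  linear_combination (Complex.I^2:ℂ)*h3 + (-16:ℂ)*h2 + (3:ℂ)*Complex.I_sq

lemma traceE : E.trace = 2 * ((Real.sqrt 6:ℝ):ℂ) / 3 := by
  simp [E, Matrix.trace_fin_two]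
  field_simp
  linear_combination (-4:ℂ) * h6

lemma cayley2 (A : Matrix (Fin 2) (Fin 2) ℂ) : A * A = A.trace • A - A.det • 1 := by
  ext i j
  fin_cases i <;> fin_cases j <;>
    simp [Matrix.mul_apply, Fin.sum_univ_succ, Matrix.trace_fin_two, Matrix.det_fin_two,
      Matrix.one_apply] <;> ring

-- the eigenvalues of E
def lam : ℂ := (((Real.sqrt 6:ℝ):ℂ) + ((Real.sqrt 3:ℝ):ℂ) * Complex.I) / 3
def mu  : ℂ := (((Real.sqrt 6:ℝ):ℂ) - ((Real.sqrt 3:ℝ):ℂ) * Complex.I) / 3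

lemma hlm : lam * mu = 1 := by
  simp only [lam, mu]
  field_simp
  linear_combination h6 + (-Complex.I^2:ℂ)*h3 + (-3:ℂ)*Complex.I_sq

lemma hlam0 : lam ≠ 0 := by
  intro h; have h' := hlm; rw [h, zero_mul] at h'; exact one_ne_zero h'.symm

lemma hd : lam - mu ≠ 0 := by
  have heq : lam - mu = 2 * ((Real.sqrt 3:ℝ):ℂ) * Complex.I / 3 := by
    simp only [lam, mu]; ring
  rw [heq]
  apply div_ne_zero _ (by norm_num)
  exact mul_ne_zero (mul_ne_zero two_ne_zero hne3) Complex.I_ne_zero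

lemma hconj : (starRingEnd ℂ) lam = mu := by
  simp only [lam, mu, map_div₀, _root_.map_add, _root_.map_mul, Complex.conj_ofReal, Complex.conj_I, map_ofNat]
  ring

lemma hsum : lam + mu = 2 * ((Real.sqrt 6:ℝ):ℂ) / 3 := by
  simp only [lam, mu]; ring

lemma hE2 : E * E = (lam + mu) • E - 1 := by
  rw [cayley2 E, detE, traceE, hsum, one_smul]

-- norm of lam is 1
lemma hnorm : ‖lam‖ = 1 := by
  have h1 : lam * (starRingEnd ℂ) lam = 1 := by rw [hconj]; exact hlm
  have hsq : Complex.normSq lam = 1 := by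
    have := Complex.mul_conj lam
    rw [h1] at this
    exact_mod_cast this.symm
  rw [Complex.norm_def, hsq, Real.sqrt_one]

-- coefficients of E^m
def aa (m : ℕ) : ℂ := (lam ^ m - mu ^ m) / (lam - mu)
def bb (m : ℕ) : ℂ := (lam * mu ^ m - mu * lam ^ m) / (lam - mu)

lemma aa0 : aa 0 = 0 := by simp [aa]
lemma bb0 : bb 0 = 1 := by
  simp only [bb, pow_zero, mul_one]
  exact div_self hd

lemma pow_formula : ∀ m : ℕ, E ^ m = aa m • E + bb m • 1 := by
  intro m
  induction m with
  | zero =>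
    rw [pow_zero, aa0, bb0, zero_smul, one_smul, zero_add]
  | succ m ih =>
    have ha : aa (m+1) = (lam + mu) * aa m + bb m := by
      simp only [aa, bb]; field_simp [hd]; ring
    have hb : bb (m+1) = - aa m := by
      have hnum : lam * mu ^ (m+1) - mu * lam ^ (m+1) = -(lam ^ m - mu ^ m) := by
        linear_combination (mu ^ m - lam ^ m) * hlm
      simp only [aa, bb]
      rw [hnum, neg_div]
    rw [pow_succ, ih, ha, hb, add_mul, smul_mul_assoc, smul_mul_assoc, one_mul, hE2]
    rw [smul_sub, smul_smul]
    module

lemma eig_formula (m : ℕ) : aa m * lam + bb m = lam ^ m := by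
  simp only [aa, bb]; field_simp [hd]; ring

-- lam is not a root of unity
lemma not_root_of_unity : ∀ m : ℕ, 1 ≤ m → lam ^ m ≠ 1 := by
  intro m hm heq
  have hlami : IsIntegral ℤ lam := by
    refine ⟨Polynomial.X ^ m - Polynomial.C 1, Polynomial.monic_X_pow_sub_C _ (by omega), ?_⟩
    simp [heq]
  have hmui : IsIntegral ℤ mu := by
    have h1 : lam * lam ^ (m - 1) = 1 := by
      rw [← pow_succ', Nat.sub_add_cancel hm]; exact heq
    have hmueq : mu = lam ^ (m - 1) := by
      apply mul_left_cancel₀ hlam0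
      rw [hlm, h1]
    rw [hmueq]; exact hlami.pow _
  have hti : IsIntegral ℤ ((lam + mu) ^ 2) := (hlami.add hmui).pow 2
  have hval : (lam + mu) ^ 2 = (8/3 : ℂ) := by
    rw [hsum]
    field_simp
    linear_combination (4:ℂ) * h6
  rw [hval] at hti
  have h83 : (8/3 : ℂ) = algebraMap ℚ ℂ (8/3 : ℚ) := by push_cast; norm_num
  rw [h83] at hti
  have hti' : IsIntegral ℤ (8/3 : ℚ) :=
    (isIntegral_algebraMap_iff (algebraMap ℚ ℂ).injective).mp hti
  obtain ⟨y, hy⟩ := IsIntegrallyClosed.isIntegral_iff.mp hti'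
  have hy3 : (y : ℚ) * 3 = 8 := by
    rw [show ((y:ℚ)) = (8/3:ℚ) from hy]; norm_num
  have : (y * 3 : ℤ) = 8 := by exact_mod_cast hy3
  omega

-- If E^m = 1 with m ≥ 1 then contradiction.
lemma Epow_ne_one : ∀ m : ℕ, 1 ≤ m → E ^ m ≠ 1 := by
  intro m hm heq
  rw [pow_formula m] at heq
  have hE01 : E 0 1 = ((2 * Real.sqrt 6 : ℝ):ℂ)⁻¹ * (3 * ((Real.sqrt 3:ℝ):ℂ) * Complex.I) := by
    simp [E]
  have hE01ne : E 0 1 ≠ 0 := by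
    rw [hE01]
    apply mul_ne_zero
    · apply inv_ne_zero; push_cast; exact mul_ne_zero two_ne_zero hne6
    · exact mul_ne_zero (mul_ne_zero (by norm_num) hne3) Complex.I_ne_zero
  have h01 : aa m * E 0 1 = 0 := by
    have := congrFun (congrFun heq 0) 1
    simpa [Matrix.add_apply, Matrix.smul_apply, smul_eq_mul,
      Matrix.one_apply_ne (show (0:Fin 2) ≠ 1 by decide)] using this
  have ha0 : aa m = 0 := by
    rcases mul_eq_zero.mp h01 with h | h
    · exact h
    · exact absurd h hE01ne
  have h00 : aa m * E 0 0 + bb m = 1 := by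
    have := congrFun (congrFun heq 0) 0
    simpa [Matrix.add_apply, Matrix.smul_apply, smul_eq_mul, Matrix.one_apply] using this
  rw [ha0, zero_mul, zero_add] at h00
  have hlm1 : lam ^ m = 1 := by
    rw [← eig_formula m, ha0, h00]; ring
  exact not_root_of_unity m hm hlm1

end Aux

open Filter in
theorem stmt4 :
    ∃ (hE : E.det = 1) (hF : F.det = 1),
      ¬ DiscreteTopology (Subgroup.closure {(⟨E, hE⟩ : SL2C), ⟨F, hF⟩} : Subgroup SL2C) := by
  refine ⟨detE, detF, ?_⟩
  intro hdisc
  set H : Subgroup SL2C := Subgroup.closure {(⟨E, detE⟩ : SL2C), ⟨F, detF⟩} with hH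
  have habs : ‖lam‖ = 1 := by exact hnorm
  have hmem : ∀ n : ℕ, lam ^ n ∈ Metric.sphere (0:ℂ) 1 := by
    intro n; simp [map_pow, habs]
  obtain ⟨x, hx, φ, hφ, hconv⟩ := (isCompact_sphere (0:ℂ) 1).tendsto_subseq hmem
  have hx0 : x ≠ 0 := by
    intro h; rw [h] at hx; simp at hx
  set mfun : ℕ → ℕ := fun k => φ (k+1) - φ k with hmfun
  have hm1 : ∀ k, 1 ≤ mfun k := by
    intro k; have := hφ (lt_add_one k); simp only [hmfun]; omega
  have hlampow : ∀ k, lam ^ (mfun k) = lam ^ (φ (k+1)) / lam ^ (φ k) := by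
    intro k
    rw [pow_sub₀ lam hlam0 (le_of_lt (hφ (lt_add_one k))), div_eq_mul_inv]
  have htend : Tendsto (fun k => lam ^ (mfun k)) atTop (nhds 1) := by
    have h1 : Tendsto (fun k => lam ^ (φ (k+1))) atTop (nhds x) :=
      hconv.comp (tendsto_add_atTop_nat 1)
    have h2 := h1.div hconv hx0
    rw [div_self hx0] at h2
    simpa only [hlampow, Pi.div_def, Function.comp_apply] using h2
  have hmupow : ∀ n : ℕ, mu ^ n = (starRingEnd ℂ) (lam ^ n) := by
    intro n; rw [map_pow, hconj]
  have hmutend : Tendsto (fun k => mu ^ (mfun k)) atTop (nhds 1) := by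
    have h1 : Tendsto (fun k => (starRingEnd ℂ) (lam ^ (mfun k))) atTop
        (nhds ((starRingEnd ℂ) 1)) := (Complex.continuous_conj.tendsto 1).comp htend
    rw [_root_.map_one] at h1
    simpa only [hmupow] using h1
  have hatend : Tendsto (fun k => aa (mfun k)) atTop (nhds 0) := by
    have h1 := (htend.sub hmutend).div_const (lam - mu)
    simpa [aa, sub_self, zero_div] using h1
  have hbtend : Tendsto (fun k => bb (mfun k)) atTop (nhds 1) := by
    have h1 := (((tendsto_const_nhds (x := lam)).mul hmutend).sub
      ((tendsto_const_nhds (x := mu)).mul htend)).div_const (lam - mu)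
    simp only [mul_one] at h1
    have h2 : (lam - mu) / (lam - mu) = 1 := div_self hd
    simpa [bb, h2] using h1
  have hEtend : Tendsto (fun k => E ^ (mfun k)) atTop (nhds 1) := by
    have h1 := (hatend.smul_const E).add
      (hbtend.smul_const (1 : Matrix (Fin 2) (Fin 2) ℂ))
    rw [zero_smul, one_smul, zero_add] at h1
    simpa only [← pow_formula] using h1
  set g : SL2C := ⟨E, detE⟩ with hg
  have hgH : g ∈ H := Subgroup.subset_closure (Set.mem_insert _ _)
  have hseq : ∀ k, g ^ (mfun k) ∈ H := fun k => pow_mem hgH _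
  have hgtend : Tendsto (fun k => g ^ (mfun k)) atTop (nhds (1 : SL2C)) := by
    refine tendsto_subtype_rng.mpr ?_
    have hcoe : (fun k => ((g ^ (mfun k) : SL2C) : Matrix (Fin 2) (Fin 2) ℂ)) =
        fun k => E ^ (mfun k) := by
      funext k; rw [Matrix.SpecialLinearGroup.coe_pow]
    show Tendsto (fun k => ((g ^ (mfun k) : SL2C) : Matrix (Fin 2) (Fin 2) ℂ)) atTop _
    rw [hcoe]
    exact hEtend
  have hHtend : Tendsto (fun k => (⟨g ^ (mfun k), hseq k⟩ : H)) atTop (nhds (1 : H)) := by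
    rw [tendsto_subtype_rng]
    exact hgtend
  rw [nhds_discrete, tendsto_pure] at hHtend
  obtain ⟨k, hk⟩ := hHtend.exists
  have hg1 : g ^ (mfun k) = 1 := by
    have := congrArg (Subtype.val) hk
    simpa using this
  have hE1 : E ^ (mfun k) = 1 := by
    have := congrArg (Subtype.val) hg1
    simpa using this
  exact Epow_ne_one (mfun k) (hm1 k) hE1
end
end

section
/- For every real number θ, one has 5 − 28·cos θ − 4·cos 2θ − 4·cos 3θ − cos 4θ = 0 if and only if there exists an integer k such that θ = 2kπ + 2·arctan(√(√2 − 1)) or θ = 2kπ − 2·arctan(√(√2 − 1)). -/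
/-!
STATEMENT 15: For every real θ, `5 − 28·cos θ − 4·cos 2θ − 4·cos 3θ − cos 4θ = 0` iff
`θ = 2kπ ± 2·arctan(√(√2 − 1))` for some integer k.
-/

theorem stmt15 (θ : ℝ) :
    5 - 28 * Real.cos θ - 4 * Real.cos (2 * θ) - 4 * Real.cos (3 * θ) -
        Real.cos (4 * θ) = 0 ↔
      ∃ k : ℤ, θ = 2 * k * Real.pi + 2 * Real.arctan (Real.sqrt (Real.sqrt 2 - 1)) ∨
        θ = 2 * k * Real.pi - 2 * Real.arctan (Real.sqrt (Real.sqrt 2 - 1)) := by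
  have hs2 : Real.sqrt 2 ^ 2 = 2 := Real.sq_sqrt (by norm_num)
  have hs1 : (1:ℝ) ≤ Real.sqrt 2 := by nlinarith [Real.sqrt_nonneg 2]
  set t := Real.sqrt (Real.sqrt 2 - 1) with ht
  have ht2 : t ^ 2 = Real.sqrt 2 - 1 := Real.sq_sqrt (by linarith)
  -- cosine of the angle
  have hcosα : Real.cos (2 * Real.arctan t) = Real.sqrt 2 - 1 := by
    rw [Real.cos_two_mul, Real.cos_arctan]
    have h1 : (0:ℝ) < 1 + t ^ 2 := by positivity
    have h2 : Real.sqrt (1 + t ^ 2) ^ 2 = 1 + t ^ 2 := Real.sq_sqrt (le_of_lt h1)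
    rw [div_pow, one_pow, h2, ht2]
    have : (1:ℝ) + (Real.sqrt 2 - 1) = Real.sqrt 2 := by ring
    rw [this]
    field_simp
    linear_combination -hs2
  have key : (5 - 28 * Real.cos θ - 4 * Real.cos (2 * θ) - 4 * Real.cos (3 * θ) -
      Real.cos (4 * θ) = 0) ↔ Real.cos θ = Real.sqrt 2 - 1 := by
    have h4 : Real.cos (4 * θ) = Real.cos (2 * (2 * θ)) := by ring_nf
    rw [h4, Real.cos_two_mul (2 * θ), Real.cos_two_mul, Real.cos_three_mul]
    set c := Real.cos θ with hc
    have hcb : -1 ≤ c := Real.neg_one_le_cos θ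
    constructor
    · intro h
      have hz : (c^2 + 2*c - 1) * (c^2 + 1) = 0 := by linear_combination (-1/8) * h
      rcases mul_eq_zero.mp hz with h5 | h5
      · have h6 : (c + 1 - Real.sqrt 2) * (c + 1 + Real.sqrt 2) = 0 := by
          linear_combination h5 - hs2
        rcases mul_eq_zero.mp h6 with h7 | h7
        · linarith
        · linarith
      · nlinarith [sq_nonneg c]
    · intro h
      rw [h]; nlinarith
  rw [key, ← hcosα, eq_comm]
  exact Real.cos_eq_cos_iff
end

section
/- For every real number θ, one has 5 + 28·cos θ − 4·cos 2θ + 4·cos 3θ − cos 4θ = 0 if and only if there exists an integer k such that θ = 2kπ + 2·arctan(√(√2 + 1)) or θ = 2kπ − 2·arctan(√(√2 + 1)). -/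
/-!
STATEMENT 16: For every real θ, `5 + 28·cos θ − 4·cos 2θ + 4·cos 3θ − cos 4θ = 0` iff
`θ = 2kπ ± 2·arctan(√(√2 + 1))` for some integer k.
-/

theorem stmt16 (θ : ℝ) :
    5 + 28 * Real.cos θ - 4 * Real.cos (2 * θ) + 4 * Real.cos (3 * θ) -
        Real.cos (4 * θ) = 0 ↔
      ∃ k : ℤ, θ = 2 * k * Real.pi + 2 * Real.arctan (Real.sqrt (Real.sqrt 2 + 1)) ∨
        θ = 2 * k * Real.pi - 2 * Real.arctan (Real.sqrt (Real.sqrt 2 + 1)) := by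
  have ht : Real.sqrt (Real.sqrt 2 + 1) ^ 2 = Real.sqrt 2 + 1 :=
    Real.sq_sqrt (by positivity)
  set t := Real.sqrt (Real.sqrt 2 + 1) with htdef
  have hs2 : Real.sqrt 2 ^ 2 = 2 := Real.sq_sqrt (by norm_num)
  have hs2pos : (0:ℝ) < Real.sqrt 2 := Real.sqrt_pos.mpr (by norm_num)
  have hcos : Real.cos (2 * Real.arctan t) = 1 - Real.sqrt 2 := by
    rw [Real.cos_two_mul, Real.cos_sq_arctan]
    have h1 : (1 : ℝ) + t ^ 2 = 2 + Real.sqrt 2 := by rw [ht]; ring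
    rw [h1]
    have h2 : (2 : ℝ) + Real.sqrt 2 ≠ 0 := by positivity
    field_simp
    nlinarith [hs2]
  rw [← Real.cos_eq_cos_iff]
  set c := Real.cos θ with hcdef
  have hc2 : Real.cos (2 * θ) = 2 * c ^ 2 - 1 := Real.cos_two_mul θ
  have hc3 : Real.cos (3 * θ) = 4 * c ^ 3 - 3 * c := by
    have := Real.cos_three_mul θ; linarith
  have hc4 : Real.cos (4 * θ) = 2 * (2 * c ^ 2 - 1) ^ 2 - 1 := by
    rw [show (4:ℝ) * θ = 2 * (2 * θ) by ring, Real.cos_two_mul, hc2]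
  rw [hc2, hc3, hc4, hcos]
  constructor
  · intro h
    have hle : c ≤ 1 := Real.cos_le_one θ
    have hsq : (c - 1) ^ 2 = 2 := by nlinarith [sq_nonneg c, sq_nonneg (c + 1)]
    have hfac : (c - 1 + Real.sqrt 2) * (c - 1 - Real.sqrt 2) = 0 := by
      linear_combination hsq - hs2
    rcases mul_eq_zero.mp hfac with h1 | h1
    · linarith
    · nlinarith
  · intro h
    rw [← h]
    nlinarith [hs2, sq_nonneg c]
end
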